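/- With the notation of the conformal Lagrangian set-up for the structure F: let x : ℝ → ℝ^{4n} be a C² curve, and suppose that for every t ∈ ℝ and every w ∈ ℝ^{4n}, Φ_L^F(x(t))(ẋ(t), w) = D₁E_L^F(x(t), ẋ(t))·w, where D₁ denotes the Fréchet derivative of E_L^F in its first (position) argument with the velocity argument held fixed. Then the conformal Euler–Lagrange equations (3.2) hold along x: for every i ∈ {1,…,n} and every t ∈ ℝ, a·(d/dt)(e^{−λ(x(t))}·(∂L/∂x_i)(x(t))) + (∂L/∂x_{n+i})(x(t)) = 0, a·(d/dt)(e^{λ(x(t))}·(∂L/∂x_{n+i})(x(t))) − (∂L/∂x_i)(x(t)) = 0, a·(d/dt)(e^{−λ(x(t))}·(∂L/∂x_{2n+i})(x(t))) + (∂L/∂x_{3n+i})(x(t)) = 0, and a·(d/dt)(e^{λ(x(t))}·(∂L/∂x_{3n+i})(x(t))) − (∂L/∂x_{2n+i})(x(t)) = 0. -/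

import Mathlib

open Real

noncomputable section

/-- The partial derivative `∂f/∂x_k` of `f : ℝ^{4n} → ℝ` at `x`, in the
coordinate direction `k`. -/
def pd {n : ℕ} (f : ((Fin 4 × Fin n) → ℝ) → ℝ) (k : Fin 4 × Fin n)
    (x : (Fin 4 × Fin n) → ℝ) : ℝ :=
  fderiv ℝ f x (Pi.single k 1)

/-- The conformal 1-form `d_F L` of the structure `F` (formula (3.11)),
viewed as a map assigning to each point `x` the linear functional
`w ↦ (d_F L)(x)(w)`. -/
def omegaF {n : ℕ} (a : ℝ) (L lam : ((Fin 4 × Fin n) → ℝ) → ℝ)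
    (x w : (Fin 4 × Fin n) → ℝ) : ℝ :=
  ∑ i : Fin n,
    (a * exp (lam x) * pd L (1, i) x * w (0, i)
     - a * exp (-lam x) * pd L (0, i) x * w (1, i)
     + a * exp (lam x) * pd L (3, i) x * w (2, i)
     - a * exp (-lam x) * pd L (2, i) x * w (3, i))

/-- The closed 2-form `Φ_L^F = -d(d_F L)`:
`Φ_L^F(x)(u, v) = (Dω_F(x)·v)(u) - (Dω_F(x)·u)(v)`. -/
def PhiF {n : ℕ} (a : ℝ) (L lam : ((Fin 4 × Fin n) → ℝ) → ℝ)
    (x u v : (Fin 4 × Fin n) → ℝ) : ℝ :=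
  fderiv ℝ (fun y => omegaF a L lam y u) x v
    - fderiv ℝ (fun y => omegaF a L lam y v) x u

/-- The conformal energy function `E_L^F` (formula (3.14)) at a point `x` with
velocity vector `X`. -/
def EF {n : ℕ} (a : ℝ) (L lam : ((Fin 4 × Fin n) → ℝ) → ℝ)
    (x X : (Fin 4 × Fin n) → ℝ) : ℝ :=
  (∑ i : Fin n,
    (a * X (0, i) * exp (lam x) * pd L (1, i) x
     - a * X (1, i) * exp (-lam x) * pd L (0, i) x
     + a * X (2, i) * exp (lam x) * pd L (3, i) x
     - a * X (3, i) * exp (-lam x) * pd L (2, i) x)) - L x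

/-!
The energy is `E_L^F(·, X) = ω_F(·, X) - L`, so in `i_X Φ_L^F (w) = D₁E_L^F(·, X)(w)` the terms
`Dω_F(·, X)(w)` cancel and the dynamical equation becomes `Dω_F(·, w)(X) = dL(w)`. Along the
curve this says `d/dt ω_F(x(t), w) = dL(x(t))(w)`, and for `w` a coordinate vector `ω_F(·, w)` is
`± a e^{±λ} ∂L/∂x_j` for the conjugate coordinate `j`: these are the four Euler–Lagrange equations.
-/

section Algebra

variable {n : ℕ} (a : ℝ) (L lam : ((Fin 4 × Fin n) → ℝ) → ℝ)

theorem EF_eq_omegaF_sub (y X : (Fin 4 × Fin n) → ℝ) :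
    EF a L lam y X = omegaF a L lam y X - L y := by
  unfold EF omegaF
  congr 1
  exact Finset.sum_congr rfl fun i _ => by ring

theorem omegaF_single_zero (i : Fin n) (y : (Fin 4 × Fin n) → ℝ) :
    omegaF a L lam y (Pi.single (0, i) 1) = a * (exp (lam y) * pd L (1, i) y) := by
  rw [omegaF, Fintype.sum_eq_single i fun j hj => by simp [hj]]
  simp [mul_assoc]

theorem omegaF_single_one (i : Fin n) (y : (Fin 4 × Fin n) → ℝ) :
    omegaF a L lam y (Pi.single (1, i) 1) = -(a * (exp (-lam y) * pd L (0, i) y)) := by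
  rw [omegaF, Fintype.sum_eq_single i fun j hj => by simp [hj]]
  simp [mul_assoc]

theorem omegaF_single_two (i : Fin n) (y : (Fin 4 × Fin n) → ℝ) :
    omegaF a L lam y (Pi.single (2, i) 1) = a * (exp (lam y) * pd L (3, i) y) := by
  rw [omegaF, Fintype.sum_eq_single i fun j hj => by simp [hj]]
  simp [mul_assoc]

theorem omegaF_single_three (i : Fin n) (y : (Fin 4 × Fin n) → ℝ) :
    omegaF a L lam y (Pi.single (3, i) 1) = -(a * (exp (-lam y) * pd L (2, i) y)) := by
  rw [omegaF, Fintype.sum_eq_single i fun j hj => by simp [hj]]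
  simp [mul_assoc]

end Algebra

section Calculus

variable {n : ℕ} {a : ℝ} {L lam : ((Fin 4 × Fin n) → ℝ) → ℝ}

theorem differentiable_pd (hL : ContDiff ℝ 2 L) (k : Fin 4 × Fin n) :
    Differentiable ℝ (pd L k) :=
  ((hL.fderiv_right (m := 1) (by norm_num)).clm_apply contDiff_const).differentiable one_ne_zero

theorem differentiable_omegaF (hL : ContDiff ℝ 2 L) (hlam : Differentiable ℝ lam)
    (X : (Fin 4 × Fin n) → ℝ) : Differentiable ℝ (fun y => omegaF a L lam y X) := by
  have := differentiable_pd hL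
  unfold omegaF
  fun_prop

theorem fderiv_omegaF_eq_of_PhiF_eq {p u w : (Fin 4 × Fin n) → ℝ}
    (hω : DifferentiableAt ℝ (fun y => omegaF a L lam y u) p) (hL : DifferentiableAt ℝ L p)
    (h : PhiF a L lam p u w = fderiv ℝ (fun y => EF a L lam y u) p w) :
    fderiv ℝ (fun y => omegaF a L lam y w) p u = fderiv ℝ L p w := by
  simp only [EF_eq_omegaF_sub, fderiv_fun_sub hω hL, PhiF, sub_apply] at h
  linarith

theorem deriv_omegaF_single_comp (hL : ContDiff ℝ 2 L) (hlam : Differentiable ℝ lam)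
    {x : ℝ → (Fin 4 × Fin n) → ℝ} (hx : Differentiable ℝ x) {t : ℝ}
    (hdyn : ∀ w, PhiF a L lam (x t) (deriv x t) w
      = fderiv ℝ (fun y => EF a L lam y (deriv x t)) (x t) w)
    (k : Fin 4 × Fin n) :
    deriv (fun s => omegaF a L lam (x s) (Pi.single k 1)) t = pd L k (x t) := by
  rw [show (fun s => omegaF a L lam (x s) (Pi.single k 1))
      = (fun y => omegaF a L lam y (Pi.single k 1)) ∘ x from rfl,
    fderiv_comp_deriv t (differentiable_omegaF hL hlam _ _) (hx t)]
  exact fderiv_omegaF_eq_of_PhiF_eq (differentiable_omegaF hL hlam _ _) 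
    ((hL.differentiable two_ne_zero) _) (hdyn _)

end Calculus

/-- Along an integral curve of the dynamical equation `i_X Φ_L^F = dE_L^F`
(equation (1.1)), the conformal Euler–Lagrange equations (3.2) hold. -/
theorem stmt8 (n : ℕ) (a : ℝ) (L lam : ((Fin 4 × Fin n) → ℝ) → ℝ)
    (hL : ContDiff ℝ 2 L) (hlam : ContDiff ℝ 2 lam)
    (x : ℝ → (Fin 4 × Fin n) → ℝ) (hx : ContDiff ℝ 2 x)
    (hdyn : ∀ (t : ℝ) (w : (Fin 4 × Fin n) → ℝ),
      PhiF a L lam (x t) (deriv x t) w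
        = fderiv ℝ (fun y => EF a L lam y (deriv x t)) (x t) w) :
    ∀ (i : Fin n) (t : ℝ),
      a * deriv (fun s => exp (-lam (x s)) * pd L (0, i) (x s)) t
          + pd L (1, i) (x t) = 0 ∧
      a * deriv (fun s => exp (lam (x s)) * pd L (1, i) (x s)) t
          - pd L (0, i) (x t) = 0 ∧
      a * deriv (fun s => exp (-lam (x s)) * pd L (2, i) (x s)) t
          + pd L (3, i) (x t) = 0 ∧
      a * deriv (fun s => exp (lam (x s)) * pd L (3, i) (x s)) t
          - pd L (2, i) (x t) = 0 := by
  intro i t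
  have h := deriv_omegaF_single_comp hL (hlam.differentiable two_ne_zero)
    (hx.differentiable two_ne_zero) (hdyn t)
  have h0 := h (0, i)
  have h1 := h (1, i)
  have h2 := h (2, i)
  have h3 := h (3, i)
  simp only [omegaF_single_zero, omegaF_single_one, omegaF_single_two, omegaF_single_three,
    deriv.fun_neg, deriv_const_mul_field'] at h0 h1 h2 h3
  exact ⟨by linarith, by linarith, by linarith, by linarith⟩

end
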